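/- arXiv:2309.07810 — 4 statements merged into one kernel-verified Lean document; each statement's English description precedes it below -/
import Mathlib

section
/- Fix p ≥ 1, eigenvalues d₁², ..., d_p² ≥ 0 with not all zero, and values u₁, ..., u_p ∈ [0, +∞] (interpreted as h''(β̂_j)). Define g_p(γ) = (1/p) Σ_{i=1}^p 1 / [ (d_i² - γ)·( (1/p) Σ_{j=1}^p 1/(γ + u_j) ) + 1 ] for γ > 0 (with 1/(γ+∞) := 0). If all d_i² > 0, then g_p is well-defined on (0, ∞) (no denominator vanishes). If d_i² = 0 for some i, then g_p is well-defined on (0, ∞) if and only if u_j ≠ 0 for at least one j. -/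
/-!
Each term `1/(γ + u_j)` lies in `[0, 1/γ]`, with `1/(γ + u_j) = 1/γ` exactly when `u_j = 0`.
Hence the average `A = avgInv u γ` satisfies `0 ≤ γ A ≤ 1`, and the denominator
`(d_i² - γ) A + 1 = d_i² A + (1 - γ A)` is a sum of two nonnegative terms. It vanishes only if
`γ A = 1` (so `A > 0` and all `u_j = 0`) and `d_i² A = 0` (so `d_i² = 0`).
-/

open Set

/-- Average of `1/(γ + u_j)`, with the convention `1/(γ + ∞) = 0`. -/
noncomputable def avgInv {p : ℕ} (u : Fin p → ENNReal) (γ : ℝ) : ℝ :=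
  (1 / (p : ℝ)) * ∑ j, ((ENNReal.ofReal γ + u j)⁻¹).toReal

/-- The `i`-th denominator of the Spectrum-Aware adjustment equation. -/
noncomputable def saDenom {p : ℕ} (d2 : Fin p → ℝ) (u : Fin p → ENNReal)
    (i : Fin p) (γ : ℝ) : ℝ :=
  (d2 i - γ) * avgInv u γ + 1

open Finset

lemma toReal_inv_ofReal_add_le {γ : ℝ} (hγ : 0 < γ) (v : ENNReal) :
    ((ENNReal.ofReal γ + v)⁻¹).toReal ≤ γ⁻¹ := by
  have hfin : (ENNReal.ofReal γ)⁻¹ ≠ ⊤ := by simpa using hγ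
  calc ((ENNReal.ofReal γ + v)⁻¹).toReal ≤ ((ENNReal.ofReal γ)⁻¹).toReal :=
        ENNReal.toReal_mono hfin (ENNReal.inv_le_inv.mpr le_self_add)
    _ = γ⁻¹ := by rw [ENNReal.toReal_inv, ENNReal.toReal_ofReal hγ.le]

lemma toReal_inv_ofReal_add_lt {γ : ℝ} (hγ : 0 < γ) {v : ENNReal} (hv : v ≠ 0) :
    ((ENNReal.ofReal γ + v)⁻¹).toReal < γ⁻¹ := by
  have hfin : (ENNReal.ofReal γ)⁻¹ ≠ ⊤ := by simpa using hγ
  calc ((ENNReal.ofReal γ + v)⁻¹).toReal < ((ENNReal.ofReal γ)⁻¹).toReal :=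
        ENNReal.toReal_strict_mono hfin
          (ENNReal.inv_lt_inv.mpr (ENNReal.lt_add_right ENNReal.ofReal_ne_top hv))
    _ = γ⁻¹ := by rw [ENNReal.toReal_inv, ENNReal.toReal_ofReal hγ.le]

section avgInv

variable {p : ℕ} {u : Fin p → ENNReal} {γ : ℝ}

lemma avgInv_eq_sum_div (u : Fin p → ENNReal) (γ : ℝ) :
    avgInv u γ = (∑ j, ((ENNReal.ofReal γ + u j)⁻¹).toReal) / p := by
  rw [avgInv, one_div_mul_eq_div]

lemma avgInv_nonneg (u : Fin p → ENNReal) (γ : ℝ) : 0 ≤ avgInv u γ := by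
  rw [avgInv_eq_sum_div]
  positivity

lemma avgInv_le_inv (hp : 0 < p) (u : Fin p → ENNReal) (hγ : 0 < γ) :
    avgInv u γ ≤ γ⁻¹ := by
  rw [avgInv_eq_sum_div, div_le_iff₀ (Nat.cast_pos.mpr hp)]
  calc ∑ j, ((ENNReal.ofReal γ + u j)⁻¹).toReal ≤ ∑ _j : Fin p, γ⁻¹ :=
        sum_le_sum fun j _ => toReal_inv_ofReal_add_le hγ (u j)
    _ = γ⁻¹ * p := by simp [mul_comm]

lemma avgInv_lt_inv (hγ : 0 < γ) (hu : ∃ j, u j ≠ 0) : avgInv u γ < γ⁻¹ := by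
  obtain ⟨j₀, hj₀⟩ := hu
  rw [avgInv_eq_sum_div, div_lt_iff₀ (Nat.cast_pos.mpr j₀.pos)]
  calc ∑ j, ((ENNReal.ofReal γ + u j)⁻¹).toReal < ∑ _j : Fin p, γ⁻¹ :=
        sum_lt_sum (fun j _ => toReal_inv_ofReal_add_le hγ (u j))
          ⟨j₀, mem_univ j₀, toReal_inv_ofReal_add_lt hγ hj₀⟩
    _ = γ⁻¹ * p := by simp [mul_comm]

lemma avgInv_eq_inv_of_forall_eq_zero (hp : 0 < p) (hγ : 0 < γ) (hu : ∀ j, u j = 0) :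
    avgInv u γ = γ⁻¹ := by
  have hp' : (p : ℝ) ≠ 0 := (Nat.cast_pos.mpr hp).ne'
  simp [avgInv_eq_sum_div, hu, ENNReal.toReal_inv, ENNReal.toReal_ofReal hγ.le, hp']

end avgInv

section saDenom

variable {p : ℕ} {d2 : Fin p → ℝ} {u : Fin p → ENNReal} {i : Fin p} {γ : ℝ}

lemma saDenom_eq_add (d2 : Fin p → ℝ) (u : Fin p → ENNReal) (i : Fin p) (γ : ℝ) :
    saDenom d2 u i γ = d2 i * avgInv u γ + (1 - γ * avgInv u γ) := by
  rw [saDenom]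
  ring

lemma one_sub_mul_avgInv_nonneg (hp : 0 < p) (u : Fin p → ENNReal) (hγ : 0 < γ) :
    0 ≤ 1 - γ * avgInv u γ := by
  have := mul_le_mul_of_nonneg_left (avgInv_le_inv hp u hγ) hγ.le
  rw [mul_inv_cancel₀ hγ.ne'] at this
  linarith

lemma saDenom_pos_of_pos (hd : 0 < d2 i) (hγ : 0 < γ) : 0 < saDenom d2 u i γ := by
  rcases (avgInv_nonneg u γ).eq_or_lt with hA | hA
  · simp [saDenom, ← hA]
  · rw [saDenom_eq_add]
    exact add_pos_of_pos_of_nonneg (mul_pos hd hA) (one_sub_mul_avgInv_nonneg i.pos u hγ)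

lemma saDenom_pos_of_exists_ne_zero (hd : 0 ≤ d2 i) (hγ : 0 < γ) (hu : ∃ j, u j ≠ 0) :
    0 < saDenom d2 u i γ := by
  have hlt := mul_lt_mul_of_pos_left (avgInv_lt_inv hγ hu) hγ
  rw [mul_inv_cancel₀ hγ.ne'] at hlt
  rw [saDenom_eq_add]
  nlinarith [mul_nonneg hd (avgInv_nonneg u γ)]

lemma saDenom_eq_zero_of_forall_eq_zero (hd : d2 i = 0) (hγ : 0 < γ) (hu : ∀ j, u j = 0) :
    saDenom d2 u i γ = 0 := by
  rw [saDenom_eq_add, avgInv_eq_inv_of_forall_eq_zero i.pos hγ hu, hd,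
    mul_inv_cancel₀ hγ.ne']
  ring

end saDenom

theorem gp_well_defined_general
    {p : ℕ}
    (d2 : Fin p → ℝ) (hd2 : ∀ i, 0 ≤ d2 i)
    (u : Fin p → ENNReal) :
    ((∀ i, 0 < d2 i) → ∀ γ > (0 : ℝ), ∀ i, 0 < saDenom d2 u i γ) ∧
      ((∃ i, d2 i = 0) →
        ((∀ γ > (0 : ℝ), ∀ i, 0 < saDenom d2 u i γ) ↔ ∃ j, u j ≠ 0)) := by
  refine ⟨fun hpos γ hγ i => saDenom_pos_of_pos (hpos i) hγ, ?_⟩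
  rintro ⟨i₀, hi₀⟩
  refine ⟨fun hall => ?_, fun hu γ hγ i => saDenom_pos_of_exists_ne_zero (hd2 i) hγ hu⟩
  by_contra! hu
  exact (hall 1 one_pos i₀).ne' (saDenom_eq_zero_of_forall_eq_zero hi₀ one_pos hu)

/-- Well-definedness of the adjustment function `g_p`: if all eigenvalues are
positive, every denominator is positive for all `γ > 0`; if some eigenvalue
vanishes, the denominators are all positive for all `γ > 0` iff some
`u_j ≠ 0`. -/
theorem gp_well_defined
    {p : ℕ} (hp : 0 < p)
    (d2 : Fin p → ℝ) (hd2 : ∀ i, 0 ≤ d2 i) (hne : ∃ i, d2 i ≠ 0)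
    (u : Fin p → ENNReal) :
    ((∀ i, 0 < d2 i) → ∀ γ > (0 : ℝ), ∀ i, 0 < saDenom d2 u i γ) ∧
      ((∃ i, d2 i = 0) →
        ((∀ γ > (0 : ℝ), ∀ i, 0 < saDenom d2 u i γ) ↔ ∃ j, u j ≠ 0)) :=
  gp_well_defined_general d2 hd2 u
end

section
/- Fix p ≥ 1, eigenvalues d₁², ..., d_p² ≥ 0 not all zero, and values u₁, ..., u_p ∈ [0, +∞]. Suppose the function g_p(γ) = (1/p) Σ_i 1/[(d_i² - γ)((1/p)Σ_j 1/(γ+u_j)) + 1] is well-defined on (0,∞). Then g_p is strictly increasing on (0, ∞) if there exists j with u_j ≠ +∞; otherwise (if u_j = +∞ for all j) g_p(γ) = 1 for all γ > 0. -/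
/-!
Write `A(γ) = avgInv u γ`. Then `(d_i² - γ) A(γ) + 1 = d_i² A(γ) + (1 - γ A(γ))`, and both
summands are antitone in `γ`: `A` is an average of the antitone maps `γ ↦ 1/(γ + u_j)`, while
`γ A(γ)` is an average of the monotone maps `γ ↦ γ/(γ + u_j)`. A finite `u_j` makes `A` strictly
antitone, so the denominator with `d_i² > 0` strictly decreases, and `g_p`, an average of
reciprocals of positive decreasing denominators, strictly increases. If every `u_j` is infinite,
`A ≡ 0`, all denominators equal `1`, and `g_p ≡ 1`.
-/

open Set

/-- The adjustment function `g_p`. -/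
noncomputable def gp {p : ℕ} (d2 : Fin p → ℝ) (u : Fin p → ENNReal) (γ : ℝ) : ℝ :=
  (1 / (p : ℝ)) * ∑ i, (saDenom d2 u i γ)⁻¹

lemma toReal_inv_ofReal_add {γ : ℝ} (hγ : 0 ≤ γ) {x : ENNReal} (hx : x ≠ ⊤) :
    ((ENNReal.ofReal γ + x)⁻¹).toReal = (γ + x.toReal)⁻¹ := by
  rw [ENNReal.toReal_inv, ENNReal.toReal_add ENNReal.ofReal_ne_top hx, ENNReal.toReal_ofReal hγ]

lemma strictAntiOn_toReal_inv_ofReal_add {x : ENNReal} (hx : x ≠ ⊤) :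
    StrictAntiOn (fun γ : ℝ => ((ENNReal.ofReal γ + x)⁻¹).toReal) (Ioi 0) := by
  intro a ha b hb hab
  simp only [toReal_inv_ofReal_add (le_of_lt ha) hx, toReal_inv_ofReal_add (le_of_lt hb) hx]
  have hx₀ : 0 ≤ x.toReal := ENNReal.toReal_nonneg
  exact inv_strictAnti₀ (by linarith [mem_Ioi.1 ha]) (by linarith)

lemma antitoneOn_toReal_inv_ofReal_add (x : ENNReal) :
    AntitoneOn (fun γ : ℝ => ((ENNReal.ofReal γ + x)⁻¹).toReal) (Ioi 0) := by
  by_cases hx : x = ⊤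
  · simp [hx, antitoneOn_const]
  · exact (strictAntiOn_toReal_inv_ofReal_add hx).antitoneOn

lemma monotoneOn_mul_toReal_inv_ofReal_add (x : ENNReal) :
    MonotoneOn (fun γ : ℝ => γ * ((ENNReal.ofReal γ + x)⁻¹).toReal) (Ioi 0) := by
  by_cases hx : x = ⊤
  · simp [hx, monotoneOn_const]
  intro a ha b hb hab
  have hx₀ : 0 ≤ x.toReal := ENNReal.toReal_nonneg
  have ha' : 0 < a + x.toReal := by linarith [mem_Ioi.1 ha]
  have hb' : 0 < b + x.toReal := by linarith [mem_Ioi.1 hb]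
  simp only [toReal_inv_ofReal_add (le_of_lt ha) hx, toReal_inv_ofReal_add (le_of_lt hb) hx,
    ← div_eq_mul_inv, div_le_div_iff₀ ha' hb']
  nlinarith

section avgInv

variable {p : ℕ} (u : Fin p → ENNReal)

lemma antitoneOn_avgInv : AntitoneOn (avgInv u) (Ioi 0) := fun a ha b hb hab =>
  mul_le_mul_of_nonneg_left
    (Finset.sum_le_sum fun j _ => antitoneOn_toReal_inv_ofReal_add (u j) ha hb hab)
    (by positivity)

lemma strictAntiOn_avgInv (hu : ∃ j, u j ≠ ⊤) : StrictAntiOn (avgInv u) (Ioi 0) := by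
  obtain ⟨j, hj⟩ := hu
  have hp : (0 : ℝ) < p := Nat.cast_pos.2 j.pos
  intro a ha b hb hab
  exact mul_lt_mul_of_pos_left
    (Finset.sum_lt_sum (fun k _ => antitoneOn_toReal_inv_ofReal_add (u k) ha hb hab.le)
      ⟨j, Finset.mem_univ j, strictAntiOn_toReal_inv_ofReal_add hj ha hb hab⟩)
    (by positivity)

lemma monotoneOn_mul_avgInv : MonotoneOn (fun γ => γ * avgInv u γ) (Ioi 0) := by
  intro a ha b hb hab
  dsimp only
  rw [avgInv, avgInv, mul_left_comm a, mul_left_comm b, Finset.mul_sum _ _ a,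
    Finset.mul_sum _ _ b]
  exact mul_le_mul_of_nonneg_left
    (Finset.sum_le_sum fun j _ => monotoneOn_mul_toReal_inv_ofReal_add (u j) ha hb hab)
    (by positivity)

lemma avgInv_eq_zero (hu : ∀ j, u j = ⊤) (γ : ℝ) : avgInv u γ = 0 := by
  simp [avgInv, hu]

end avgInv

section saDenom

variable {p : ℕ} (d2 : Fin p → ℝ) (u : Fin p → ENNReal) (i : Fin p)

lemma saDenom_eq_mul_avgInv_add (γ : ℝ) :
    saDenom d2 u i γ = d2 i * avgInv u γ + (1 - γ * avgInv u γ) := by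
  unfold saDenom
  ring

lemma antitoneOn_saDenom (hd : 0 ≤ d2 i) : AntitoneOn (saDenom d2 u i) (Ioi 0) := by
  intro a ha b hb hab
  rw [saDenom_eq_mul_avgInv_add, saDenom_eq_mul_avgInv_add]
  have := mul_le_mul_of_nonneg_left (antitoneOn_avgInv u ha hb hab) hd
  linarith [monotoneOn_mul_avgInv u ha hb hab]

lemma strictAntiOn_saDenom (hd : 0 < d2 i) (hu : ∃ j, u j ≠ ⊤) :
    StrictAntiOn (saDenom d2 u i) (Ioi 0) := by
  intro a ha b hb hab
  rw [saDenom_eq_mul_avgInv_add, saDenom_eq_mul_avgInv_add]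
  have := mul_lt_mul_of_pos_left (strictAntiOn_avgInv u hu ha hb hab) hd
  linarith [monotoneOn_mul_avgInv u ha hb hab.le]

end saDenom

section gp

variable {p : ℕ} (d2 : Fin p → ℝ) (u : Fin p → ENNReal)

lemma strictMonoOn_gp (hd2 : ∀ i, 0 ≤ d2 i) (hne : ∃ i, d2 i ≠ 0) (hu : ∃ j, u j ≠ ⊤)
    (hwd : ∀ γ > (0 : ℝ), ∀ i, 0 < saDenom d2 u i γ) : StrictMonoOn (gp d2 u) (Ioi 0) := by
  obtain ⟨i, hi⟩ := hne
  have hp : (0 : ℝ) < p := Nat.cast_pos.2 i.pos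
  intro a ha b hb hab
  refine mul_lt_mul_of_pos_left (Finset.sum_lt_sum (fun k _ => ?_) ⟨i, Finset.mem_univ i, ?_⟩)
    (by positivity)
  · exact inv_anti₀ (hwd b hb k) (antitoneOn_saDenom d2 u k (hd2 k) ha hb hab.le)
  · exact inv_strictAnti₀ (hwd b hb i)
      (strictAntiOn_saDenom d2 u i ((hd2 i).lt_of_ne' hi) hu ha hb hab)

lemma gp_eq_one (hp : p ≠ 0) (hu : ∀ j, u j = ⊤) (γ : ℝ) : gp d2 u γ = 1 := by
  simp [gp, saDenom, avgInv_eq_zero u hu, hp]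

end gp

theorem gp_strictMono_or_const_general
    {p : ℕ}
    (d2 : Fin p → ℝ) (hd2 : ∀ i, 0 ≤ d2 i) (hne : ∃ i, d2 i ≠ 0)
    (u : Fin p → ENNReal)
    (hwd : ∀ γ > (0 : ℝ), ∀ i, 0 < saDenom d2 u i γ) :
    ((∃ j, u j ≠ ⊤) → StrictMonoOn (gp d2 u) (Set.Ioi 0)) ∧
      ((∀ j, u j = ⊤) → ∀ γ > (0 : ℝ), gp d2 u γ = 1) :=
  ⟨fun hu => strictMonoOn_gp d2 u hd2 hne hu hwd,
    fun hu γ _ => gp_eq_one d2 u (hne.elim fun i _ => i.pos.ne') hu γ⟩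

/-- Monotonicity of `g_p`: assuming well-definedness, `g_p` is strictly
increasing on `(0,∞)` if some `u_j ≠ +∞`; otherwise `g_p ≡ 1` on `(0,∞)`. -/
theorem gp_strictMono_or_const
    {p : ℕ} (hp : 0 < p)
    (d2 : Fin p → ℝ) (hd2 : ∀ i, 0 ≤ d2 i) (hne : ∃ i, d2 i ≠ 0)
    (u : Fin p → ENNReal)
    (hwd : ∀ γ > (0 : ℝ), ∀ i, 0 < saDenom d2 u i γ) :
    ((∃ j, u j ≠ ⊤) → StrictMonoOn (gp d2 u) (Set.Ioi 0)) ∧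
      ((∀ j, u j = ⊤) → ∀ γ > (0 : ℝ), gp d2 u γ = 1) :=
  gp_strictMono_or_const_general d2 hd2 hne u hwd
end

section
/- Fix p ≥ 1, eigenvalues d₁², ..., d_p² ≥ 0 not all zero, and u₁, ..., u_p ∈ [0, +∞]. Assume that ‖u‖₀ = p (all u_j ≠ 0) or all d_i² ≠ 0, so that g_p is well-defined. Then the equation g_p(γ) = 1 admits a unique solution γ ∈ (0, ∞) if and only if there exists some j ∈ [p] with u_j ≠ +∞. -/
open Set

/-! ### Auxiliary real-valued functions -/

/-- Real version of `1/(γ + u)` with convention `1/(γ+∞)=0`. -/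
noncomputable def fA (u : ENNReal) (γ : ℝ) : ℝ :=
  if u = ⊤ then 0 else (γ + u.toReal)⁻¹

/-- Real version of `u/(γ + u)` with convention `∞/(γ+∞)=1`. -/
noncomputable def gA (u : ENNReal) (γ : ℝ) : ℝ :=
  if u = ⊤ then 1 else u.toReal * (γ + u.toReal)⁻¹

lemma toReal_inv_eq (u : ENNReal) {γ : ℝ} (hγ : 0 < γ) :
    ((ENNReal.ofReal γ + u)⁻¹).toReal = fA u γ := by
  by_cases h : u = ⊤
  · simp [fA, h]
  · rw [fA, if_neg h, ← ENNReal.toReal_ofReal hγ.le, ← ENNReal.toReal_add ENNReal.ofReal_ne_top h,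
      ENNReal.toReal_inv, ENNReal.toReal_ofReal hγ.le]

lemma avgInv_eq {p : ℕ} (u : Fin p → ENNReal) {γ : ℝ} (hγ : 0 < γ) :
    avgInv u γ = (1 / (p : ℝ)) * ∑ j, fA (u j) γ := by
  unfold avgInv
  congr 1
  exact Finset.sum_congr rfl fun j _ => toReal_inv_eq (u j) hγ

lemma fA_nonneg (u : ENNReal) {γ : ℝ} (hγ : 0 < γ) : 0 ≤ fA u γ := by
  unfold fA
  split
  · exact le_refl 0
  · positivity

lemma fA_pos {u : ENNReal} (hu : u ≠ ⊤) {γ : ℝ} (hγ : 0 < γ) : 0 < fA u γ := by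
  unfold fA
  rw [if_neg hu]
  have := ENNReal.toReal_nonneg (a := u)
  positivity

lemma fA_le (u : ENNReal) {γ : ℝ} (hγ : 0 < γ) : fA u γ ≤ γ⁻¹ := by
  unfold fA
  split
  · positivity
  · exact inv_anti₀ hγ (le_add_of_nonneg_right ENNReal.toReal_nonneg)

lemma fA_anti (u : ENNReal) {a b : ℝ} (ha : 0 < a) (hab : a ≤ b) : fA u b ≤ fA u a := by
  unfold fA
  split
  · exact le_refl 0
  · have := ENNReal.toReal_nonneg (a := u)
    exact inv_anti₀ (by linarith) (by linarith)

lemma fA_strictAnti {u : ENNReal} (hu : u ≠ ⊤) {a b : ℝ} (ha : 0 < a) (hab : a < b) :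
    fA u b < fA u a := by
  unfold fA
  rw [if_neg hu, if_neg hu]
  have := ENNReal.toReal_nonneg (a := u)
  exact inv_strictAnti₀ (by linarith) (by linarith)

lemma gA_eq (u : ENNReal) {γ : ℝ} (hγ : 0 < γ) : gA u γ = 1 - γ * fA u γ := by
  unfold gA fA
  split
  · ring
  · have := ENNReal.toReal_nonneg (a := u)
    field_simp
    ring

lemma gA_nonneg (u : ENNReal) {γ : ℝ} (hγ : 0 < γ) : 0 ≤ gA u γ := by
  unfold gA
  split
  · norm_num
  · have := ENNReal.toReal_nonneg (a := u)
    positivity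

lemma gA_le_one (u : ENNReal) {γ : ℝ} (hγ : 0 < γ) : gA u γ ≤ 1 := by
  unfold gA
  split
  · exact le_refl 1
  · have h := ENNReal.toReal_nonneg (a := u)
    rw [← div_eq_mul_inv, div_le_one (by linarith)]
    linarith

lemma gA_pos {u : ENNReal} (hu : u ≠ 0) {γ : ℝ} (hγ : 0 < γ) : 0 < gA u γ := by
  unfold gA
  split
  · norm_num
  · next h =>
    have := ENNReal.toReal_pos hu h
    positivity

lemma gA_anti (u : ENNReal) {a b : ℝ} (ha : 0 < a) (hab : a ≤ b) : gA u b ≤ gA u a := by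
  unfold gA
  split
  · exact le_refl 1
  · have h := ENNReal.toReal_nonneg (a := u)
    exact mul_le_mul_of_nonneg_left (inv_anti₀ (by linarith) (by linarith)) h

lemma gA_strictAnti {u : ENNReal} (hu : u ≠ ⊤) (hu0 : u ≠ 0) {a b : ℝ}
    (ha : 0 < a) (hab : a < b) : gA u b < gA u a := by
  unfold gA
  rw [if_neg hu, if_neg hu]
  have h := ENNReal.toReal_pos hu0 hu
  exact mul_lt_mul_of_pos_left (inv_strictAnti₀ (by linarith) (by linarith)) h

lemma saDenom_eq {p : ℕ} (hp : 0 < p) (d2 : Fin p → ℝ) (u : Fin p → ENNReal)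
    (i : Fin p) {γ : ℝ} (hγ : 0 < γ) :
    saDenom d2 u i γ = (1 / (p : ℝ)) * ∑ j, (d2 i * fA (u j) γ + gA (u j) γ) := by
  have hp' : (p : ℝ) ≠ 0 := Nat.cast_ne_zero.mpr hp.ne'
  rw [saDenom, avgInv_eq u hγ, Finset.sum_add_distrib, mul_add]
  rw [Finset.sum_congr rfl fun j _ => gA_eq (u j) hγ]
  rw [Finset.sum_sub_distrib]
  simp only [Finset.sum_const, Finset.card_univ, Fintype.card_fin, nsmul_eq_mul, mul_one]
  rw [← Finset.mul_sum, ← Finset.mul_sum]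
  field_simp
  ring


section Core

variable {p : ℕ} (hp : 0 < p) (d2 : Fin p → ℝ) (u : Fin p → ENNReal)

include hp

lemma one_div_p_pos : (0:ℝ) < 1 / (p:ℝ) :=
  one_div_pos.mpr (Nat.cast_pos.mpr hp)

lemma saDenom_pos (hd2 : ∀ i, 0 ≤ d2 i)
    (hwd : (∀ j, u j ≠ 0) ∨ (∀ i, d2 i ≠ 0)) {j0 : Fin p} (hj0 : u j0 ≠ ⊤)
    (i : Fin p) {γ : ℝ} (hγ : 0 < γ) : 0 < saDenom d2 u i γ := by
  rw [saDenom_eq hp d2 u i hγ]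
  refine mul_pos (one_div_p_pos hp) ?_
  apply Finset.sum_pos'
  · intro j _
    exact add_nonneg (mul_nonneg (hd2 i) (fA_nonneg (u j) hγ)) (gA_nonneg (u j) hγ)
  · refine ⟨j0, Finset.mem_univ _, ?_⟩
    rcases hwd with h | h
    · exact add_pos_of_nonneg_of_pos (mul_nonneg (hd2 i) (fA_nonneg (u j0) hγ))
        (gA_pos (h j0) hγ)
    · exact add_pos_of_pos_of_nonneg
        (mul_pos (lt_of_le_of_ne (hd2 i) (Ne.symm (h i))) (fA_pos hj0 hγ))
        (gA_nonneg (u j0) hγ)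

lemma saDenom_lt (hd2 : ∀ i, 0 ≤ d2 i)
    (hwd : (∀ j, u j ≠ 0) ∨ (∀ i, d2 i ≠ 0)) {j0 : Fin p} (hj0 : u j0 ≠ ⊤)
    (i : Fin p) {a b : ℝ} (ha : 0 < a) (hab : a < b) :
    saDenom d2 u i b < saDenom d2 u i a := by
  have hb : 0 < b := ha.trans hab
  rw [saDenom_eq hp d2 u i ha, saDenom_eq hp d2 u i hb]
  refine mul_lt_mul_of_pos_left ?_ (one_div_p_pos hp)
  apply Finset.sum_lt_sum
  · intro j _
    exact add_le_add (mul_le_mul_of_nonneg_left (fA_anti (u j) ha hab.le) (hd2 i))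
      (gA_anti (u j) ha hab.le)
  · refine ⟨j0, Finset.mem_univ _, ?_⟩
    rcases hwd with h | h
    · exact add_lt_add_of_le_of_lt
        (mul_le_mul_of_nonneg_left (fA_anti (u j0) ha hab.le) (hd2 i))
        (gA_strictAnti hj0 (h j0) ha hab)
    · exact add_lt_add_of_lt_of_le
        (mul_lt_mul_of_pos_left (fA_strictAnti hj0 ha hab)
          (lt_of_le_of_ne (hd2 i) (Ne.symm (h i))))
        (gA_anti (u j0) ha hab.le)

lemma gp_strictMono (hd2 : ∀ i, 0 ≤ d2 i)
    (hwd : (∀ j, u j ≠ 0) ∨ (∀ i, d2 i ≠ 0)) {j0 : Fin p} (hj0 : u j0 ≠ ⊤)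
    {a b : ℝ} (ha : 0 < a) (hab : a < b) : gp d2 u a < gp d2 u b := by
  haveI : Nonempty (Fin p) := Fin.pos_iff_nonempty.mp hp
  unfold gp
  refine mul_lt_mul_of_pos_left ?_ (one_div_p_pos hp)
  apply Finset.sum_lt_sum_of_nonempty Finset.univ_nonempty
  intro i _
  exact inv_strictAnti₀ (saDenom_pos hp d2 u hd2 hwd hj0 i (ha.trans hab))
    (saDenom_lt hp d2 u hd2 hwd hj0 i ha hab)

omit hp in
lemma fA_continuousOn (v : ENNReal) : ContinuousOn (fA v) (Ioi 0) := by
  unfold fA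
  by_cases h : v = ⊤
  · simp only [if_pos h]
    exact continuousOn_const
  · simp only [if_neg h]
    refine (continuousOn_id.add continuousOn_const).inv₀ ?_
    intro x hx
    have := ENNReal.toReal_nonneg (a := v)
    have hx' : (0:ℝ) < x := hx
    show x + v.toReal ≠ 0
    positivity

omit hp in
lemma avgInv_continuousOn : ContinuousOn (avgInv u) (Ioi 0) := by
  refine ContinuousOn.congr (g := avgInv u)
    (f := fun γ => (1 / (p:ℝ)) * ∑ j, fA (u j) γ) ?_ ?_
  · exact continuousOn_const.mul
      (continuousOn_finset_sum _ fun j _ => fA_continuousOn (u j))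
  · intro γ hγ
    exact avgInv_eq u hγ

lemma gp_continuousOn (hd2 : ∀ i, 0 ≤ d2 i)
    (hwd : (∀ j, u j ≠ 0) ∨ (∀ i, d2 i ≠ 0)) {j0 : Fin p} (hj0 : u j0 ≠ ⊤) :
    ContinuousOn (gp d2 u) (Ioi 0) := by
  unfold gp
  refine continuousOn_const.mul (continuousOn_finset_sum _ fun i _ => ?_)
  refine ContinuousOn.inv₀ ?_ ?_
  · unfold saDenom
    exact ((continuousOn_const.sub continuousOn_id).mul (avgInv_continuousOn u)).add
      continuousOn_const
  · intro γ hγ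
    exact (saDenom_pos hp d2 u hd2 hwd hj0 i hγ).ne'

lemma exists_gp_gt (hd2 : ∀ i, 0 ≤ d2 i)
    (hwd : (∀ j, u j ≠ 0) ∨ (∀ i, d2 i ≠ 0)) {j0 : Fin p} (hj0 : u j0 ≠ ⊤) :
    ∃ b : ℝ, 0 < b ∧ 1 < gp d2 u b := by
  haveI : Nonempty (Fin p) := Fin.pos_iff_nonempty.mp hp
  set v0 : ℝ := (u j0).toReal with hv0
  set D : ℝ := ∑ i, d2 i with hD
  have hv0n : (0:ℝ) ≤ v0 := ENNReal.toReal_nonneg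
  have hDn : (0:ℝ) ≤ D := Finset.sum_nonneg fun i _ => hd2 i
  have hpR : (0:ℝ) < (p:ℝ) := Nat.cast_pos.mpr hp
  have hpR1 : (1:ℝ) ≤ (p:ℝ) := Nat.one_le_cast.mpr hp
  set b : ℝ := 2 * (p:ℝ) * (D + v0 + 1) with hb
  have hbpos : (0:ℝ) < b := by positivity
  refine ⟨b, hbpos, ?_⟩
  have key : ∀ i, saDenom d2 u i b < 1 := by
    intro i
    have hd2iD : d2 i ≤ D := Finset.single_le_sum (fun i _ => hd2 i) (Finset.mem_univ i)
    have h1 : ∑ j, d2 i * fA (u j) b ≤ (p:ℝ) * (D * b⁻¹) := by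
      calc ∑ j, d2 i * fA (u j) b ≤ ∑ _j : Fin p, D * b⁻¹ :=
            Finset.sum_le_sum fun j _ =>
              mul_le_mul hd2iD (fA_le (u j) hbpos) (fA_nonneg (u j) hbpos) hDn
        _ = (p:ℝ) * (D * b⁻¹) := by
            simp [Finset.sum_const, Finset.card_univ, mul_comm]
    have h2 : ∑ j, gA (u j) b ≤ ((p:ℝ) - 1) + v0 * b⁻¹ := by
      rw [← Finset.sum_erase_add _ _ (Finset.mem_univ j0)]
      have hcard : ((Finset.univ.erase j0).card : ℝ) = (p:ℝ) - 1 := by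
        rw [Finset.card_erase_of_mem (Finset.mem_univ j0)]
        simp [Finset.card_univ]
        rw [Nat.cast_sub hp]
        simp
      have hA : ∑ j ∈ Finset.univ.erase j0, gA (u j) b ≤ (p:ℝ) - 1 := by
        calc ∑ j ∈ Finset.univ.erase j0, gA (u j) b
            ≤ ∑ _j ∈ Finset.univ.erase j0, (1:ℝ) :=
              Finset.sum_le_sum fun j _ => gA_le_one (u j) hbpos
          _ = (p:ℝ) - 1 := by rw [Finset.sum_const, nsmul_eq_mul, mul_one, hcard]
      have hB : gA (u j0) b ≤ v0 * b⁻¹ := by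
        rw [gA, if_neg hj0]
        exact mul_le_mul_of_nonneg_left (inv_anti₀ hbpos (by linarith)) hv0n
      linarith
    rw [saDenom_eq hp d2 u i hbpos]
    have hsum : ∑ j, (d2 i * fA (u j) b + gA (u j) b) < (p:ℝ) := by
      rw [Finset.sum_add_distrib]
      have hbbig : (p:ℝ) * D + v0 < b := by rw [hb]; nlinarith
      have : (p:ℝ) * (D * b⁻¹) + v0 * b⁻¹ < 1 := by
        rw [← mul_assoc, ← add_mul]
        rw [← div_eq_mul_inv, div_lt_one hbpos]
        linarith
      linarith
    calc (1/(p:ℝ)) * ∑ j, (d2 i * fA (u j) b + gA (u j) b)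
        < (1/(p:ℝ)) * (p:ℝ) := mul_lt_mul_of_pos_left hsum (one_div_p_pos hp)
      _ = 1 := by field_simp
  have hinv : ∀ i, (1:ℝ) < (saDenom d2 u i b)⁻¹ := fun i =>
    (one_lt_inv₀ (saDenom_pos hp d2 u hd2 hwd hj0 i hbpos)).mpr (key i)
  calc (1:ℝ) = (1/(p:ℝ)) * (p:ℝ) := by field_simp
    _ = (1/(p:ℝ)) * ∑ _i : Fin p, (1:ℝ) := by simp [Finset.card_univ]
    _ < (1/(p:ℝ)) * ∑ i, (saDenom d2 u i b)⁻¹ :=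
        mul_lt_mul_of_pos_left
          (Finset.sum_lt_sum_of_nonempty Finset.univ_nonempty fun i _ => hinv i)
          (one_div_p_pos hp)
    _ = gp d2 u b := rfl

lemma exists_gp_lt (hd2 : ∀ i, 0 ≤ d2 i) (hne : ∃ i, d2 i ≠ 0)
    (hwd : (∀ j, u j ≠ 0) ∨ (∀ i, d2 i ≠ 0)) {j0 : Fin p} (hj0 : u j0 ≠ ⊤)
    {c : ℝ} (hc : 0 < c) :
    ∃ a : ℝ, 0 < a ∧ a < c ∧ gp d2 u a < 1 := by
  by_cases hzero : ∃ j1, u j1 = 0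
  · -- some u_j = 0, hence all d_i² > 0 : gp is small near 0
    obtain ⟨j1, hj1⟩ := hzero
    have hall : ∀ i, d2 i ≠ 0 := hwd.resolve_left (fun h => (h j1) hj1)
    have hd2pos : ∀ i, 0 < d2 i := fun i => lt_of_le_of_ne (hd2 i) (Ne.symm (hall i))
    set C : ℝ := ∑ i, (d2 i)⁻¹ with hC
    have hCn : (0:ℝ) ≤ C := Finset.sum_nonneg fun i _ => inv_nonneg.mpr (hd2 i)
    set a : ℝ := min (c/2) (1/(2*(C+1))) with ha
    have hapos : 0 < a := lt_min (by linarith) (by positivity)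
    have hac : a < c := (min_le_left _ _).trans_lt (by linarith)
    refine ⟨a, hapos, hac, ?_⟩
    have hfa : fA (u j1) a = a⁻¹ := by
      rw [fA, if_neg (hj1 ▸ ENNReal.zero_ne_top), hj1]
      simp
    have hinv : ∀ i, (saDenom d2 u i a)⁻¹ ≤ (p:ℝ) * a * (d2 i)⁻¹ := by
      intro i
      have hlow : (1/(p:ℝ)) * (d2 i * a⁻¹) ≤ saDenom d2 u i a := by
        rw [saDenom_eq hp d2 u i hapos]
        refine mul_le_mul_of_nonneg_left ?_ (one_div_p_pos hp).le
        have hterm : d2 i * a⁻¹ ≤ d2 i * fA (u j1) a + gA (u j1) a := by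
          rw [hfa]
          have := gA_nonneg (u j1) hapos
          linarith
        refine hterm.trans (Finset.single_le_sum (f := fun j => d2 i * fA (u j) a + gA (u j) a)
          (fun j _ => add_nonneg (mul_nonneg (hd2 i) (fA_nonneg (u j) hapos))
            (gA_nonneg (u j) hapos)) (Finset.mem_univ j1))
      have hposlow : 0 < (1/(p:ℝ)) * (d2 i * a⁻¹) :=
        mul_pos (one_div_p_pos hp) (mul_pos (hd2pos i) (inv_pos.mpr hapos))
      calc (saDenom d2 u i a)⁻¹ ≤ ((1/(p:ℝ)) * (d2 i * a⁻¹))⁻¹ := inv_anti₀ hposlow hlow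
        _ = (p:ℝ) * a * (d2 i)⁻¹ := by
            have hp0 : (p:ℝ) ≠ 0 := (Nat.cast_pos.mpr hp).ne'
            field_simp
    calc gp d2 u a ≤ (1/(p:ℝ)) * ∑ i, ((p:ℝ) * a * (d2 i)⁻¹) :=
          mul_le_mul_of_nonneg_left (Finset.sum_le_sum fun i _ => hinv i)
            (one_div_p_pos hp).le
      _ = a * C := by
          rw [← Finset.mul_sum]
          have hp0 : (p:ℝ) ≠ 0 := (Nat.cast_pos.mpr hp).ne'
          field_simp
          ring_nf
          exact hC.symm
      _ ≤ (1/(2*(C+1))) * C :=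
          mul_le_mul_of_nonneg_right (min_le_right _ _) hCn
      _ < 1 := by
          rw [div_mul_eq_mul_div, one_mul, div_lt_one (by linarith)]
          linarith
  · -- all u_j ≠ 0 : gp tends to a limit < 1 as γ → 0⁺
    push_neg at hzero
    obtain ⟨i0, hi0⟩ := hne
    have hd2i0 : 0 < d2 i0 := lt_of_le_of_ne (hd2 i0) (Ne.symm hi0)
    have hvpos : ∀ j, u j ≠ ⊤ → 0 < (u j).toReal := fun j hj =>
      ENNReal.toReal_pos (hzero j) hj
    set M0 : ℝ := (1/(p:ℝ)) * ∑ j, fA (u j) 0 with hM0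
    have hfA0 : ∀ j, 0 ≤ fA (u j) 0 := by
      intro j
      rw [fA]
      split
      · exact le_refl 0
      · positivity
    have hM0pos : 0 < M0 := by
      refine mul_pos (one_div_p_pos hp) (Finset.sum_pos' (fun j _ => hfA0 j)
        ⟨j0, Finset.mem_univ _, ?_⟩)
      rw [fA, if_neg hj0]
      have := hvpos j0 hj0
      positivity
    have hfAt : ∀ j, Filter.Tendsto (fA (u j)) (nhdsWithin 0 (Ioi 0)) (nhds (fA (u j) 0)) := by
      intro j
      by_cases h : u j = ⊤
      · have heq : fA (u j) = fun _ => (0:ℝ) := funext fun γ => by rw [fA, if_pos h]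
        rw [heq]
        exact tendsto_const_nhds
      · have heq : fA (u j) = fun γ => (γ + (u j).toReal)⁻¹ :=
          funext fun γ => by rw [fA, if_neg h]
        rw [heq]
        have hne0 : (0:ℝ) + (u j).toReal ≠ 0 := by
          have := hvpos j h; linarith
        have hca : ContinuousAt (fun γ : ℝ => (γ + (u j).toReal)⁻¹) 0 :=
          (continuousAt_id.add continuousAt_const).inv₀ hne0
        exact hca.tendsto.mono_left nhdsWithin_le_nhds
    have havgt : Filter.Tendsto (avgInv u) (nhdsWithin 0 (Ioi 0)) (nhds M0) := by
      have h1 : Filter.Tendsto (fun γ => (1/(p:ℝ)) * ∑ j, fA (u j) γ)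
          (nhdsWithin 0 (Ioi 0)) (nhds M0) := by
        rw [hM0]
        exact ((tendsto_finset_sum _ fun j _ => hfAt j).const_mul _)
      refine h1.congr' ?_
      filter_upwards [self_mem_nhdsWithin] with γ hγ
      exact (avgInv_eq u hγ).symm
    have hid : Filter.Tendsto (fun γ : ℝ => γ) (nhdsWithin 0 (Ioi 0)) (nhds 0) :=
      Filter.tendsto_id.mono_right nhdsWithin_le_nhds
    have hsd : ∀ i, Filter.Tendsto (saDenom d2 u i) (nhdsWithin 0 (Ioi 0))
        (nhds (d2 i * M0 + 1)) := by
      intro i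
      have h1 : Filter.Tendsto (fun γ : ℝ => (d2 i - γ) * avgInv u γ + 1)
          (nhdsWithin 0 (Ioi 0)) (nhds ((d2 i - 0) * M0 + 1)) :=
        ((tendsto_const_nhds.sub hid).mul havgt).add tendsto_const_nhds
      simp only [sub_zero] at h1
      exact h1
    set L : ℝ := (1/(p:ℝ)) * ∑ i, (d2 i * M0 + 1)⁻¹ with hL
    have hgpt : Filter.Tendsto (gp d2 u) (nhdsWithin 0 (Ioi 0)) (nhds L) := by
      rw [hL]
      refine Filter.Tendsto.const_mul _ (tendsto_finset_sum _ fun i _ => ?_)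
      refine (hsd i).inv₀ ?_
      have := mul_nonneg (hd2 i) hM0pos.le
      positivity
    have hL1 : L < 1 := by
      have hterm : ∀ i, (d2 i * M0 + 1)⁻¹ ≤ 1 := by
        intro i
        have := mul_nonneg (hd2 i) hM0pos.le
        rw [inv_le_one_iff₀]
        right; linarith
      have hterm0 : (d2 i0 * M0 + 1)⁻¹ < 1 := by
        have h1 : 0 < d2 i0 * M0 := mul_pos hd2i0 hM0pos
        rw [inv_lt_one_iff₀]
        right; linarith
      calc L < (1/(p:ℝ)) * ∑ _i : Fin p, (1:ℝ) := by
            refine mul_lt_mul_of_pos_left ?_ (one_div_p_pos hp)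
            exact Finset.sum_lt_sum (fun i _ => hterm i) ⟨i0, Finset.mem_univ _, hterm0⟩
        _ = 1 := by
            have hp0 : (p:ℝ) ≠ 0 := (Nat.cast_pos.mpr hp).ne'
            simp [Finset.card_univ]
            exact inv_mul_cancel₀ hp0
    have hev : ∀ᶠ γ in nhdsWithin 0 (Ioi 0), gp d2 u γ < 1 :=
      hgpt.eventually_lt_const hL1
    have hmem : Ioo (0:ℝ) c ∈ nhdsWithin (0:ℝ) (Ioi 0) :=
      Ioo_mem_nhdsGT_of_mem ⟨le_refl 0, hc⟩
    obtain ⟨a, h1, h2⟩ := (hev.and (Filter.eventually_of_mem hmem fun x hx => hx)).exists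
    exact ⟨a, h2.1, h2.2, h1⟩


end Core

/-- Existence and uniqueness for the adjustment equation: if either all
`u_j ≠ 0` or all `d_i² ≠ 0` (ensuring well-definedness), then
`g_p(γ) = 1` has a unique solution `γ ∈ (0,∞)` iff some `u_j ≠ +∞`. -/
theorem gp_unique_solution_iff
    {p : ℕ} (hp : 0 < p)
    (d2 : Fin p → ℝ) (hd2 : ∀ i, 0 ≤ d2 i) (hne : ∃ i, d2 i ≠ 0)
    (u : Fin p → ENNReal)
    (hwd : (∀ j, u j ≠ 0) ∨ (∀ i, d2 i ≠ 0)) :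
    (∃! γ : ℝ, γ ∈ Set.Ioi (0 : ℝ) ∧ gp d2 u γ = 1) ↔ ∃ j, u j ≠ ⊤ := by
  have hp0 : (p:ℝ) ≠ 0 := (Nat.cast_pos.mpr hp).ne'
  constructor
  · intro hEU
    by_contra h
    push_neg at h
    have havg : ∀ γ : ℝ, avgInv u γ = 0 := by
      intro γ
      unfold avgInv
      have hz : ∀ j, ((ENNReal.ofReal γ + u j)⁻¹).toReal = 0 := by
        intro j; rw [h j]; simp
      rw [Finset.sum_congr rfl fun j _ => hz j]
      simp
    have hgp : ∀ γ : ℝ, gp d2 u γ = 1 := by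
      intro γ
      unfold gp saDenom
      rw [Finset.sum_congr rfl fun i _ => by rw [havg γ, mul_zero, zero_add, inv_one]]
      simp [Finset.card_univ]
      exact inv_mul_cancel₀ hp0
    obtain ⟨γ0, _, huniq⟩ := hEU
    have e1 : (1:ℝ) = γ0 := huniq 1 ⟨by norm_num, hgp 1⟩
    have e2 : (2:ℝ) = γ0 := huniq 2 ⟨by norm_num, hgp 2⟩
    linarith
  · rintro ⟨j0, hj0⟩
    obtain ⟨b, hb, hgpb⟩ := exists_gp_gt hp d2 u hd2 hwd hj0
    obtain ⟨a, ha, hab, hgpa⟩ := exists_gp_lt hp d2 u hd2 hne hwd hj0 hb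
    have hconts : ContinuousOn (gp d2 u) (Icc a b) :=
      (gp_continuousOn hp d2 u hd2 hwd hj0).mono (fun x hx => lt_of_lt_of_le ha hx.1)
    have hmid : (1:ℝ) ∈ Ioo (gp d2 u a) (gp d2 u b) := ⟨hgpa, hgpb⟩
    obtain ⟨γ, hγmem, hγeq⟩ := intermediate_value_Ioo hab.le hconts hmid
    have hγpos : (0:ℝ) < γ := ha.trans hγmem.1
    refine ⟨γ, ⟨hγpos, hγeq⟩, ?_⟩
    rintro γ' ⟨hγ'pos, hγ'eq⟩
    have hγ'pos' : (0:ℝ) < γ' := hγ'pos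
    rcases lt_trichotomy γ' γ with hlt | heq | hgt
    · have hmono := gp_strictMono hp d2 u hd2 hwd hj0 hγ'pos' hlt
      rw [hγ'eq, hγeq] at hmono
      exact absurd hmono (lt_irrefl 1)
    · exact heq
    · have hmono := gp_strictMono hp d2 u hd2 hwd hj0 hγpos hgt
      rw [hγ'eq, hγeq] at hmono
      exact absurd hmono (lt_irrefl 1)
end

section
/- Suppose X = QᵀDO where O is Haar-distributed on the orthogonal group O(p), independent of β*, and Q, D are deterministic. Let y = Xβ* + ε with E[ε|β*, O] = 0. For the ridge estimator β̂ = (XᵀX + λ₂I)⁻¹Xᵀy and adj chosen so that (1 + λ₂/adj)·(1/p)Σ_i d_i²/(d_i²+λ₂) = 1, the debiased estimator β̂ᵘ = β̂ + adj⁻¹Xᵀ(y - Xβ̂) satisfies E[β̂ᵘ | β*] = β*. The key fact used is E[o_i o_iᵀ] = (1/p)·I_p for each row o_iᵀ of a Haar orthogonal matrix O. -/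
open Matrix MeasureTheory

instance matrixMeasurableSpace (m n : Type*) : MeasurableSpace (Matrix m n ℝ) :=
  inferInstanceAs (MeasurableSpace (m → n → ℝ))

section Aux

lemma rdg_row_sq {p : ℕ} {M : Matrix (Fin p) (Fin p) ℝ} (h : M * Mᵀ = 1) (k : Fin p) :
    ∑ m, M k m * M k m = 1 := by
  have h2 := congrArg (fun N => N k k) h
  simpa [Matrix.mul_apply, Matrix.one_apply, Matrix.transpose_apply] using h2

lemma rdg_entry_abs {p : ℕ} {M : Matrix (Fin p) (Fin p) ℝ} (h : M * Mᵀ = 1) (k a : Fin p) :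
    |M k a| ≤ 1 := by
  have h1 : M k a * M k a ≤ 1 := by
    rw [← rdg_row_sq h k]
    exact Finset.single_le_sum (f := fun m => M k m * M k m)
      (fun m _ => mul_self_nonneg _) (Finset.mem_univ a)
  nlinarith [abs_nonneg (M k a), abs_mul_abs_self (M k a)]

lemma rdg_entry_meas {p : ℕ} {Ω : Type*} [MeasurableSpace Ω]
    (O : Ω → Matrix (Fin p) (Fin p) ℝ) (hOmeas : Measurable O) (k i : Fin p) :
    Measurable fun ω => O ω k i :=
  (measurable_pi_apply i).comp ((measurable_pi_apply k).comp hOmeas)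

lemma rdg_mulU_meas {p : ℕ} {Ω : Type*} [MeasurableSpace Ω]
    (O : Ω → Matrix (Fin p) (Fin p) ℝ) (hOmeas : Measurable O)
    (U : Matrix (Fin p) (Fin p) ℝ) :
    Measurable fun ω => O ω * U := by
  apply measurable_pi_lambda
  intro a
  apply measurable_pi_lambda
  intro b
  show Measurable fun ω => ∑ m, O ω a m * U m b
  exact Finset.measurable_sum _ fun m _ => (rdg_entry_meas O hOmeas a m).mul_const _

lemma ridge_alg {n p : ℕ}
    (O : Matrix (Fin p) (Fin p) ℝ) (hO1 : Oᵀ * O = 1) (hO2 : O * Oᵀ = 1)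
    (Q : Matrix (Fin n) (Fin n) ℝ) (hQ : Qᵀ * Q = 1)
    (D : Matrix (Fin n) (Fin p) ℝ) (d2 : Fin p → ℝ) (hd2 : ∀ i, 0 ≤ d2 i)
    (hD : Dᵀ * D = Matrix.diagonal d2)
    (lam₂ : ℝ) (hlam : 0 < lam₂) (adj : ℝ) (hadj : 0 < adj)
    (βstar : Fin p → ℝ) (e : Fin n → ℝ)
    (X : Matrix (Fin n) (Fin p) ℝ) (hX : X = Qᵀ * D * O)
    (y : Fin n → ℝ) (hy : y = X *ᵥ βstar + e)
    (βhat : Fin p → ℝ)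
    (hβhat : βhat = (Xᵀ * X + lam₂ • (1 : Matrix (Fin p) (Fin p) ℝ))⁻¹ *ᵥ (Xᵀ *ᵥ y))
    (βu : Fin p → ℝ) (hβu : βu = βhat + adj⁻¹ • (Xᵀ *ᵥ (y - X *ᵥ βhat))) :
    βu = (1 + lam₂ / adj) •
      ((Oᵀ * Matrix.diagonal (fun k => d2 k / (d2 k + lam₂)) * O) *ᵥ βstar
        + (Oᵀ * (Matrix.diagonal (fun k => (d2 k + lam₂)⁻¹) * Dᵀ * Q)) *ᵥ e) := by
  have hpos : ∀ k, 0 < d2 k + lam₂ := fun k => by linarith [hd2 k]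
  have hXt : Xᵀ = Oᵀ * Dᵀ * Q := by
    rw [hX]; simp [Matrix.transpose_mul, Matrix.mul_assoc]
  have hQQt : Q * Qᵀ = 1 := mul_eq_one_comm.mp hQ
  have hA : Xᵀ * X = Oᵀ * Matrix.diagonal d2 * O := by
    rw [hXt, hX]
    simp only [Matrix.mul_assoc]
    rw [← Matrix.mul_assoc Q Qᵀ, hQQt, Matrix.one_mul, ← Matrix.mul_assoc Dᵀ D, hD,
      ← Matrix.mul_assoc]
  have hconj : ∀ v w : Fin p → ℝ,
      (Oᵀ * Matrix.diagonal v * O) * (Oᵀ * Matrix.diagonal w * O)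
        = Oᵀ * Matrix.diagonal (fun k => v k * w k) * O := by
    intro v w
    calc (Oᵀ * Matrix.diagonal v * O) * (Oᵀ * Matrix.diagonal w * O)
        = Oᵀ * Matrix.diagonal v * (O * Oᵀ) * (Matrix.diagonal w * O) := by
          simp only [Matrix.mul_assoc]
      _ = Oᵀ * (Matrix.diagonal v * Matrix.diagonal w) * O := by
          rw [hO2, Matrix.mul_one]; simp only [Matrix.mul_assoc]
      _ = Oᵀ * Matrix.diagonal (fun k => v k * w k) * O := by
          rw [Matrix.diagonal_mul_diagonal]
  have hsm1 : (lam₂ • (1 : Matrix (Fin p) (Fin p) ℝ))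
      = Oᵀ * Matrix.diagonal (fun _ => lam₂) * O := by
    have h1 : Matrix.diagonal (fun _ : Fin p => lam₂)
        = lam₂ • (1 : Matrix (Fin p) (Fin p) ℝ) := by
      rw [Matrix.smul_one_eq_diagonal]
    rw [h1, Matrix.mul_smul, Matrix.mul_one, Matrix.smul_mul, hO1]
  have hSdiag : Xᵀ * X + lam₂ • (1 : Matrix (Fin p) (Fin p) ℝ)
      = Oᵀ * Matrix.diagonal (fun k => d2 k + lam₂) * O := by
    rw [hA, hsm1, ← Matrix.add_mul, ← Matrix.mul_add, Matrix.diagonal_add]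
  have hSinv : (Xᵀ * X + lam₂ • (1 : Matrix (Fin p) (Fin p) ℝ))⁻¹
      = Oᵀ * Matrix.diagonal (fun k => (d2 k + lam₂)⁻¹) * O := by
    apply Matrix.inv_eq_right_inv
    rw [hSdiag, hconj]
    have h2 : (fun k => (d2 k + lam₂) * (d2 k + lam₂)⁻¹) = fun _ => (1:ℝ) := by
      funext k; exact mul_inv_cancel₀ (hpos k).ne'
    rw [h2, Matrix.diagonal_one, Matrix.mul_one, hO1]
  have hmat : (1 : Matrix (Fin p) (Fin p) ℝ)
      - Xᵀ * X * (Oᵀ * Matrix.diagonal (fun k => (d2 k + lam₂)⁻¹) * O)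
      = lam₂ • (Oᵀ * Matrix.diagonal (fun k => (d2 k + lam₂)⁻¹) * O) := by
    rw [hA, hconj]
    have h1 : (1 : Matrix (Fin p) (Fin p) ℝ)
        = Oᵀ * Matrix.diagonal (fun _ : Fin p => (1:ℝ)) * O := by
      rw [Matrix.diagonal_one, Matrix.mul_one, hO1]
    rw [h1, ← Matrix.sub_mul, ← Matrix.mul_sub, Matrix.diagonal_sub]
    have h3 : (fun k => (1:ℝ) - d2 k * (d2 k + lam₂)⁻¹)
        = fun k => lam₂ * (d2 k + lam₂)⁻¹ := by
      funext k
      have hne : d2 k + lam₂ ≠ 0 := (hpos k).ne'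
      field_simp
      ring
    have h4 : Matrix.diagonal (fun k => lam₂ * (d2 k + lam₂)⁻¹)
        = lam₂ • Matrix.diagonal (fun k => (d2 k + lam₂)⁻¹) := by
      rw [show (fun k => lam₂ * (d2 k + lam₂)⁻¹) = lam₂ • (fun k => (d2 k + lam₂)⁻¹) from rfl,
        Matrix.diagonal_smul]
    rw [h3, h4, Matrix.mul_smul, Matrix.smul_mul]
  have key2 : Oᵀ * Matrix.diagonal (fun k => (d2 k + lam₂)⁻¹) * O * Xᵀ
      = Oᵀ * Matrix.diagonal (fun k => (d2 k + lam₂)⁻¹) * Dᵀ * Q := by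
    rw [hXt]
    calc Oᵀ * Matrix.diagonal (fun k => (d2 k + lam₂)⁻¹) * O * (Oᵀ * Dᵀ * Q)
        = Oᵀ * Matrix.diagonal (fun k => (d2 k + lam₂)⁻¹) * (O * Oᵀ) * (Dᵀ * Q) := by
          simp only [Matrix.mul_assoc]
      _ = Oᵀ * Matrix.diagonal (fun k => (d2 k + lam₂)⁻¹) * Dᵀ * Q := by
          rw [hO2, Matrix.mul_one]; simp only [Matrix.mul_assoc]
  have key1 : Oᵀ * Matrix.diagonal (fun k => (d2 k + lam₂)⁻¹) * O * Xᵀ * X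
      = Oᵀ * Matrix.diagonal (fun k => d2 k / (d2 k + lam₂)) * O := by
    rw [key2, hX]
    simp only [Matrix.mul_assoc]
    rw [← Matrix.mul_assoc Q Qᵀ, hQQt, Matrix.one_mul, ← Matrix.mul_assoc Dᵀ D, hD,
      ← Matrix.mul_assoc (Matrix.diagonal fun k => (d2 k + lam₂)⁻¹) (Matrix.diagonal d2) O,
      Matrix.diagonal_mul_diagonal]
    rw [show (fun k => (d2 k + lam₂)⁻¹ * d2 k) = (fun k => d2 k / (d2 k + lam₂)) by
      funext k; rw [mul_comm, div_eq_mul_inv]]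
  have hbh : βhat
      = (Oᵀ * Matrix.diagonal (fun k => (d2 k + lam₂)⁻¹) * O) *ᵥ (Xᵀ *ᵥ y) := by
    rw [hβhat, hSinv]
  have main : ∀ w : Fin p → ℝ,
      (Oᵀ * Matrix.diagonal (fun k => (d2 k + lam₂)⁻¹) * O) *ᵥ w
        + adj⁻¹ • (w - (Xᵀ * X * (Oᵀ * Matrix.diagonal (fun k => (d2 k + lam₂)⁻¹) * O)) *ᵥ w)
      = (1 + lam₂ / adj) • ((Oᵀ * Matrix.diagonal (fun k => (d2 k + lam₂)⁻¹) * O) *ᵥ w) := by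
    intro w
    have h5 : w - (Xᵀ * X * (Oᵀ * Matrix.diagonal (fun k => (d2 k + lam₂)⁻¹) * O)) *ᵥ w
        = lam₂ • ((Oᵀ * Matrix.diagonal (fun k => (d2 k + lam₂)⁻¹) * O) *ᵥ w) := by
      nth_rewrite 1 [← Matrix.one_mulVec w]
      rw [← Matrix.sub_mulVec, hmat, Matrix.smul_mulVec]
    rw [h5, smul_smul, add_smul, one_smul]
    congr 2
    rw [div_eq_mul_inv, mul_comm]
  have hbu : βu = (1 + lam₂ / adj) •
      ((Oᵀ * Matrix.diagonal (fun k => (d2 k + lam₂)⁻¹) * O) *ᵥ (Xᵀ *ᵥ y)) := by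
    rw [hβu, hbh, Matrix.mulVec_sub]
    rw [Matrix.mulVec_mulVec (Xᵀ *ᵥ y) X
      (Oᵀ * Matrix.diagonal (fun k => (d2 k + lam₂)⁻¹) * O)]
    rw [Matrix.mulVec_mulVec (Xᵀ *ᵥ y) Xᵀ
      (X * (Oᵀ * Matrix.diagonal (fun k => (d2 k + lam₂)⁻¹) * O))]
    rw [← Matrix.mul_assoc]
    exact main (Xᵀ *ᵥ y)
  rw [hbu, hy]
  congr 1
  rw [Matrix.mulVec_add Xᵀ, Matrix.mulVec_mulVec βstar Xᵀ X, Matrix.mulVec_add,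
    Matrix.mulVec_mulVec βstar _ (Xᵀ * X), Matrix.mulVec_mulVec e _ Xᵀ,
    ← Matrix.mul_assoc, key1, key2]
  simp only [Matrix.mul_assoc]

lemma haar_moment {p : ℕ} (hp : 0 < p) {Ω : Type*} [MeasurableSpace Ω]
    (μpr : Measure Ω) [IsProbabilityMeasure μpr]
    (O : Ω → Matrix (Fin p) (Fin p) ℝ) (hOmeas : Measurable O)
    (hOorth : ∀ ω, (O ω)ᵀ * O ω = 1 ∧ O ω * (O ω)ᵀ = 1)
    (hHaarR : ∀ U : Matrix (Fin p) (Fin p) ℝ, Uᵀ * U = 1 →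
        Measure.map (fun ω => O ω * U) μpr = Measure.map O μpr)
    (k i j : Fin p) :
    ∫ ω, O ω k i * O ω k j ∂μpr = if i = j then (p : ℝ)⁻¹ else 0 := by
  have hint : ∀ (a b : Fin p), Integrable (fun ω => O ω k a * O ω k b) μpr := by
    intro a b
    refine (integrable_const (1:ℝ)).mono'
      ((rdg_entry_meas O hOmeas k a).mul (rdg_entry_meas O hOmeas k b)).aestronglyMeasurable
      (ae_of_all _ fun ω => ?_)
    rw [Real.norm_eq_abs, abs_mul]
    nlinarith [rdg_entry_abs (hOorth ω).2 k a, rdg_entry_abs (hOorth ω).2 k b,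
      abs_nonneg (O ω k a), abs_nonneg (O ω k b)]
  have cov : ∀ (U : Matrix (Fin p) (Fin p) ℝ), Uᵀ * U = 1 → ∀ a b : Fin p,
      ∫ ω, (O ω * U) k a * (O ω * U) k b ∂μpr = ∫ ω, O ω k a * O ω k b ∂μpr := by
    intro U hU a b
    have hF : Measurable fun M : Matrix (Fin p) (Fin p) ℝ => M k a * M k b :=
      Measurable.mul (f := fun M : Matrix (Fin p) (Fin p) ℝ => M k a) (g := fun M : Matrix (Fin p) (Fin p) ℝ => M k b)
        ((measurable_pi_apply a).comp (measurable_pi_apply k))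
        ((measurable_pi_apply b).comp (measurable_pi_apply k))
    calc ∫ ω, (O ω * U) k a * (O ω * U) k b ∂μpr
        = ∫ M, M k a * M k b ∂(Measure.map (fun ω => O ω * U) μpr) := by
          rw [integral_map (rdg_mulU_meas O hOmeas U).aemeasurable
            hF.stronglyMeasurable.aestronglyMeasurable]
      _ = ∫ M, M k a * M k b ∂(Measure.map O μpr) := by rw [hHaarR U hU]
      _ = ∫ ω, O ω k a * O ω k b ∂μpr := by
          rw [integral_map hOmeas.aemeasurable hF.stronglyMeasurable.aestronglyMeasurable]
  by_cases hij : i = j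
  · subst hij
    simp only [if_pos rfl]
    have heq : ∀ i' : Fin p, ∫ ω, O ω k i' * O ω k i' ∂μpr
        = ∫ ω, O ω k i * O ω k i ∂μpr := by
      intro i'
      set σ : Equiv.Perm (Fin p) := Equiv.swap i i' with hσ
      set U : Matrix (Fin p) (Fin p) ℝ := Matrix.of fun m l => if m = σ l then 1 else 0
        with hUdef
      have hentry : ∀ (M : Matrix (Fin p) (Fin p) ℝ) (a l : Fin p),
          (M * U) a l = M a (σ l) := by
        intro M a l
        show (∑ m, M a m * (if m = σ l then (1:ℝ) else 0)) = M a (σ l)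
        rw [Finset.sum_eq_single (σ l)]
        · simp
        · intro m _ hm; simp [hm]
        · intro h; exact absurd (Finset.mem_univ _) h
      have hU : Uᵀ * U = 1 := by
        ext l l'
        show (∑ m, (if m = σ l then (1:ℝ) else 0) * (if m = σ l' then (1:ℝ) else 0))
          = (1 : Matrix (Fin p) (Fin p) ℝ) l l'
        rw [Finset.sum_eq_single (σ l)]
        · by_cases h : l = l'
          · subst h; simp [Matrix.one_apply]
          · have hne : σ l ≠ σ l' := fun hc => h (σ.injective hc)
            simp [Matrix.one_apply, hne, h]
        · intro m _ hm; simp [hm]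
        · intro h; exact absurd (Finset.mem_univ _) h
      have hcv := cov U hU i i
      have h2 : ∀ ω, (O ω * U) k i * (O ω * U) k i = O ω k i' * O ω k i' := by
        intro ω
        have hsw : σ i = i' := Equiv.swap_apply_left i i'
        rw [hentry, hsw]
      rw [integral_congr_ae (ae_of_all _ h2)] at hcv
      exact hcv
    have hsum1 : ∑ i' : Fin p, ∫ ω, O ω k i' * O ω k i' ∂μpr = 1 := by
      rw [← integral_finset_sum _ (fun i' _ => hint i' i')]
      rw [integral_congr_ae (ae_of_all _ fun ω => rdg_row_sq (hOorth ω).2 k)]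
      simp
    have hsum2 : ∑ i' : Fin p, ∫ ω, O ω k i' * O ω k i' ∂μpr
        = (p : ℝ) * ∫ ω, O ω k i * O ω k i ∂μpr := by
      rw [Finset.sum_congr rfl (fun i' _ => heq i')]
      simp [Finset.sum_const, nsmul_eq_mul]
    have hpne : (p : ℝ) ≠ 0 := Nat.cast_ne_zero.mpr hp.ne'
    rw [hsum2] at hsum1
    convert eq_inv_of_mul_eq_one_right hsum1 using 1 <;> simp
  · simp only [if_neg hij]
    set U : Matrix (Fin p) (Fin p) ℝ :=
      Matrix.diagonal (fun m => if m = j then (-1:ℝ) else 1) with hUdef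
    have hU : Uᵀ * U = 1 := by
      rw [hUdef, Matrix.diagonal_transpose, Matrix.diagonal_mul_diagonal]
      have : (fun m => (if m = j then (-1:ℝ) else 1) * (if m = j then (-1:ℝ) else 1))
          = fun _ => (1:ℝ) := by
        funext m; by_cases h : m = j <;> simp [h]
      rw [this, Matrix.diagonal_one]
    have hcov := cov U hU i j
    have hval : ∀ ω, (O ω * U) k i * (O ω * U) k j = -(O ω k i * O ω k j) := by
      intro ω
      rw [hUdef, Matrix.mul_diagonal, Matrix.mul_diagonal]
      simp [hij]
    rw [integral_congr_ae (ae_of_all _ hval), integral_neg] at hcov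
    linarith

lemma eps_zero {p : ℕ} {Ω : Type*} [MeasurableSpace Ω]
    (μpr : Measure Ω) [IsProbabilityMeasure μpr]
    (O : Ω → Matrix (Fin p) (Fin p) ℝ) (hOmeas : Measurable O)
    (hOorth : ∀ ω, (O ω)ᵀ * O ω = 1 ∧ O ω * (O ω)ᵀ = 1)
    (e : Ω → ℝ) (he : Integrable e μpr)
    (hcond : μpr[e|MeasurableSpace.comap O inferInstance] =ᵐ[μpr] 0)
    (k i : Fin p) :
    ∫ ω, O ω k i * e ω ∂μpr = 0 := by
  have hm : MeasurableSpace.comap O inferInstance ≤ _ := hOmeas.comap_le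
  have hOm : Measurable[MeasurableSpace.comap O inferInstance] O :=
    Measurable.of_comap_le le_rfl
  have hfmeas : Measurable fun ω => O ω k i := rdg_entry_meas O hOmeas k i
  have hfm : StronglyMeasurable[MeasurableSpace.comap O inferInstance]
      (fun ω => O ω k i) :=
    ((measurable_pi_apply i).comp ((measurable_pi_apply k).comp hOm)).stronglyMeasurable
  have hbdd : ∀ ω, ‖O ω k i‖ ≤ 1 := by
    intro ω
    rw [Real.norm_eq_abs]
    exact rdg_entry_abs (hOorth ω).2 k i
  have hfg : Integrable ((fun ω => O ω k i) * e) μpr :=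
    he.bdd_mul (c := 1) hfmeas.aestronglyMeasurable (ae_of_all _ hbdd)
  haveI : SigmaFinite (μpr.trim hm) := (isFiniteMeasure_trim hm).toSigmaFinite
  have h1 := condExp_mul_of_stronglyMeasurable_left hfm hfg he
  have h2 : ∫ ω, ((fun ω => O ω k i) * e) ω ∂μpr
      = ∫ ω, (μpr[(fun ω => O ω k i) * e|MeasurableSpace.comap O inferInstance]) ω ∂μpr :=
    (integral_condExp hm).symm
  have h3 : (fun ω => O ω k i * e ω) = (fun ω => O ω k i) * e := rfl
  rw [h3, h2]
  rw [integral_congr_ae (h1.trans ?_), integral_zero]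
  filter_upwards [hcond] with ω hω
  simp [Pi.mul_apply, hω]

end Aux

/-- Unbiasedness of the debiased ridge estimator under a Haar-distributed
right factor `O`: with `X = Qᵀ D O`, `O` Haar on the orthogonal group
(characterized by left/right invariance) independent of the mean-zero noise in
the sense `E[ε | O] = 0`, and `adj` chosen so that
`(1 + lam₂/adj)·(1/p)Σᵢ d²ᵢ/(d²ᵢ+lam₂) = 1`, the debiased ridge estimator
`β̂ᵘ = β̂ + adj⁻¹ Xᵀ(y - Xβ̂)` satisfies `E[β̂ᵘ] = β*`. -/
theorem ridge_debiased_unbiased_haar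
    {n p : ℕ} (hp : 0 < p)
    {Ω : Type*} [MeasurableSpace Ω] (μpr : Measure Ω) [IsProbabilityMeasure μpr]
    (O : Ω → Matrix (Fin p) (Fin p) ℝ) (hOmeas : Measurable O)
    (hOorth : ∀ ω, (O ω)ᵀ * O ω = 1 ∧ O ω * (O ω)ᵀ = 1)
    (hHaarR : ∀ U : Matrix (Fin p) (Fin p) ℝ, Uᵀ * U = 1 →
        Measure.map (fun ω => O ω * U) μpr = Measure.map O μpr)
    (hHaarL : ∀ U : Matrix (Fin p) (Fin p) ℝ, Uᵀ * U = 1 →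
        Measure.map (fun ω => U * O ω) μpr = Measure.map O μpr)
    (Q : Matrix (Fin n) (Fin n) ℝ) (hQ : Qᵀ * Q = 1)
    (D : Matrix (Fin n) (Fin p) ℝ)
    (d2 : Fin p → ℝ) (hd2 : ∀ i, 0 ≤ d2 i) (hdne : ∃ i, d2 i ≠ 0)
    (hD : Dᵀ * D = Matrix.diagonal d2)
    (lam₂ : ℝ) (hlam : 0 < lam₂)
    (adj : ℝ) (hadj : 0 < adj)
    (hcenter : (1 + lam₂ / adj) * ((1 / (p : ℝ)) * ∑ i, d2 i / (d2 i + lam₂)) = 1)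
    (βstar : Fin p → ℝ)
    (ε : Ω → Fin n → ℝ) (hεmeas : ∀ j, Measurable (fun ω => ε ω j))
    (hεint : ∀ j, Integrable (fun ω => ε ω j) μpr)
    (hεcond : ∀ j,
      μpr[(fun ω => ε ω j)|MeasurableSpace.comap O inferInstance] =ᵐ[μpr] 0)
    (X : Ω → Matrix (Fin n) (Fin p) ℝ) (hX : ∀ ω, X ω = Qᵀ * D * O ω)
    (y : Ω → Fin n → ℝ) (hy : ∀ ω, y ω = X ω *ᵥ βstar + ε ω)
    (βhat : Ω → Fin p → ℝ)
    (hβhat : ∀ ω, βhat ω =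
      ((X ω)ᵀ * X ω + lam₂ • (1 : Matrix (Fin p) (Fin p) ℝ))⁻¹ *ᵥ ((X ω)ᵀ *ᵥ y ω))
    (βu : Ω → Fin p → ℝ)
    (hβu : ∀ ω, βu ω = βhat ω + adj⁻¹ • ((X ω)ᵀ *ᵥ (y ω - X ω *ᵥ βhat ω))) :
    ∀ i, ∫ ω, βu ω i ∂μpr = βstar i := by
  intro i
  set c := 1 + lam₂ / adj with hc
  set g : Fin p → ℝ := fun k => d2 k / (d2 k + lam₂) with hg
  set B : Matrix (Fin p) (Fin n) ℝ :=
    Matrix.diagonal (fun k => (d2 k + lam₂)⁻¹) * Dᵀ * Q with hB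
  have hrep : ∀ ω, βu ω = c •
      (((O ω)ᵀ * Matrix.diagonal g * O ω) *ᵥ βstar + ((O ω)ᵀ * B) *ᵥ ε ω) := fun ω =>
    ridge_alg (O ω) (hOorth ω).1 (hOorth ω).2 Q hQ D d2 hd2 hD lam₂ hlam adj hadj
      βstar (ε ω) (X ω) (hX ω) (y ω) (hy ω) (βhat ω) (hβhat ω) (βu ω) (hβu ω)
  have hval : ∀ ω, βu ω i
      = (∑ j, ∑ k, (c * βstar j * g k) * (O ω k i * O ω k j))
        + ∑ m, ∑ k, (c * B k m) * (O ω k i * ε ω m) := by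
    intro ω
    have hent1 : ∀ (a b : Fin p), ((O ω)ᵀ * Matrix.diagonal g * O ω) a b
        = ∑ k, g k * (O ω k a * O ω k b) := by
      intro a b
      rw [Matrix.mul_apply]
      refine Finset.sum_congr rfl fun k _ => ?_
      rw [Matrix.mul_diagonal, Matrix.transpose_apply]
      ring
    have hent2 : ∀ (a : Fin p) (m : Fin n), ((O ω)ᵀ * B) a m
        = ∑ k, O ω k a * B k m := by
      intro a m
      rw [Matrix.mul_apply]
      refine Finset.sum_congr rfl fun k _ => ?_
      rw [Matrix.transpose_apply]
    have hmv1 : (((O ω)ᵀ * Matrix.diagonal g * O ω) *ᵥ βstar) i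
        = ∑ j, (∑ k, g k * (O ω k i * O ω k j)) * βstar j := by
      simp only [Matrix.mulVec, dotProduct]
      exact Finset.sum_congr rfl fun j _ => by rw [hent1]
    have hmv2 : (((O ω)ᵀ * B) *ᵥ ε ω) i = ∑ m, (∑ k, O ω k i * B k m) * ε ω m := by
      simp only [Matrix.mulVec, dotProduct]
      exact Finset.sum_congr rfl fun m _ => by rw [hent2]
    rw [hrep ω, Pi.smul_apply, Pi.add_apply, smul_eq_mul, hmv1, hmv2, mul_add,
      Finset.mul_sum, Finset.mul_sum]
    refine congrArg₂ (· + ·) ?_ ?_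
    · refine Finset.sum_congr rfl fun j _ => ?_
      rw [Finset.sum_mul, Finset.mul_sum]
      refine Finset.sum_congr rfl fun k _ => ?_
      ring
    · refine Finset.sum_congr rfl fun m _ => ?_
      rw [Finset.sum_mul, Finset.mul_sum]
      refine Finset.sum_congr rfl fun k _ => ?_
      ring
  have hOOint : ∀ (k' j' : Fin p), Integrable (fun ω => O ω k' i * O ω k' j') μpr := by
    intro k' j'
    refine (integrable_const (1:ℝ)).mono'
      ((rdg_entry_meas O hOmeas k' i).mul (rdg_entry_meas O hOmeas k' j')).aestronglyMeasurable
      (ae_of_all _ fun ω => ?_)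
    rw [Real.norm_eq_abs, abs_mul]
    nlinarith [rdg_entry_abs (hOorth ω).2 k' i, rdg_entry_abs (hOorth ω).2 k' j',
      abs_nonneg (O ω k' i), abs_nonneg (O ω k' j')]
  have hOeint : ∀ (k' : Fin p) (m' : Fin n),
      Integrable (fun ω => O ω k' i * ε ω m') μpr := fun k' m' =>
    (hεint m').bdd_mul (c := 1) (rdg_entry_meas O hOmeas k' i).aestronglyMeasurable
      (ae_of_all _ fun ω => by
        rw [Real.norm_eq_abs]; exact rdg_entry_abs (hOorth ω).2 k' i)
  have int1 : Integrable
      (fun ω => ∑ j, ∑ k, (c * βstar j * g k) * (O ω k i * O ω k j)) μpr :=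
    integrable_finset_sum _ fun j _ =>
      integrable_finset_sum _ fun k _ => (hOOint k j).const_mul _
  have int2 : Integrable
      (fun ω => ∑ m, ∑ k, (c * B k m) * (O ω k i * ε ω m)) μpr :=
    integrable_finset_sum _ fun m _ =>
      integrable_finset_sum _ fun k _ => (hOeint k m).const_mul _
  have hI1 : ∫ ω, ∑ j, ∑ k, (c * βstar j * g k) * (O ω k i * O ω k j) ∂μpr = βstar i := by
    rw [integral_finset_sum _ (fun j _ =>
      integrable_finset_sum _ fun k _ => (hOOint k j).const_mul _)]
    have hj : ∀ j : Fin p, ∫ ω, ∑ k, (c * βstar j * g k) * (O ω k i * O ω k j) ∂μpr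
        = ∑ k, (c * βstar j * g k) * (if i = j then (p:ℝ)⁻¹ else 0) := by
      intro j
      rw [integral_finset_sum _ (fun k _ => (hOOint k j).const_mul _)]
      refine Finset.sum_congr rfl fun k _ => ?_
      rw [integral_const_mul _ _, haar_moment hp μpr O hOmeas hOorth hHaarR k i j]
    rw [Finset.sum_congr rfl fun j _ => hj j]
    rw [Finset.sum_eq_single i]
    · simp only [eq_self_iff_true, if_true]
      have hterm : ∀ k : Fin p, (c * βstar i * g k) * (p:ℝ)⁻¹
          = βstar i * (c * ((1/(p:ℝ)) * (d2 k / (d2 k + lam₂)))) := by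
        intro k; rw [hg]; ring
      rw [Finset.sum_congr rfl fun k _ => hterm k, ← Finset.mul_sum, ← Finset.mul_sum,
        ← Finset.mul_sum, hcenter, mul_one]
    · intro j _ hji
      have : ¬ (i = j) := fun h => hji h.symm
      simp [this]
    · intro h; exact absurd (Finset.mem_univ _) h
  have hI2 : ∫ ω, ∑ m, ∑ k, (c * B k m) * (O ω k i * ε ω m) ∂μpr = 0 := by
    rw [integral_finset_sum _ (fun m _ =>
      integrable_finset_sum _ fun k _ => (hOeint k m).const_mul _)]
    refine Finset.sum_eq_zero fun m _ => ?_
    rw [integral_finset_sum _ (fun k _ => (hOeint k m).const_mul _)]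
    refine Finset.sum_eq_zero fun k _ => ?_
    rw [integral_const_mul _ _,
      eps_zero μpr O hOmeas hOorth (fun ω => ε ω m) (hεint m) (hεcond m) k i, mul_zero]
  calc ∫ ω, βu ω i ∂μpr
      = ∫ ω, ((∑ j, ∑ k, (c * βstar j * g k) * (O ω k i * O ω k j))
          + ∑ m, ∑ k, (c * B k m) * (O ω k i * ε ω m)) ∂μpr :=
        integral_congr_ae (ae_of_all _ fun ω => hval ω)
    _ = (∫ ω, ∑ j, ∑ k, (c * βstar j * g k) * (O ω k i * O ω k j) ∂μpr)
          + ∫ ω, ∑ m, ∑ k, (c * B k m) * (O ω k i * ε ω m) ∂μpr :=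
        integral_add int1 int2
    _ = βstar i := by rw [hI1, hI2, add_zero]
end
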